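/- arXiv:2405.13454 — 4 statements merged into one kernel-verified Lean document; each statement's English description precedes it below -/
import Mathlib

section
/- Let G be an Erdős–Rényi random graph on n vertices with edge probability p ∈ (0,1), and let w = p/(1-p). Then the probability that every connected component of G is a clique equals (1-p)^{C(n,2)} · B_n(w). -/
open Finset

/-- Number of intra-block pairs of a set partition. -/
def partWeight {n : ℕ} (P : Finpartition (Finset.univ : Finset (Fin n))) : ℕ :=
  ∑ S ∈ P.parts, (S.card).choose 2

/-- The generalized Bell number `B_n(w) = ∑_P ∏_{S block of P} w^{C(|S|,2)}`. -/
noncomputable def genBell (n : ℕ) (w : ℝ) : ℝ :=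
  ∑ P : Finpartition (Finset.univ : Finset (Fin n)), ∏ S ∈ P.parts, w ^ (S.card).choose 2

/-- A cluster graph: every connected component is a clique, i.e. any two distinct
vertices in the same component are adjacent. -/
def IsClusterGraph {V : Type*} (G : SimpleGraph V) : Prop :=
  ∀ u v : V, G.Reachable u v → u ≠ v → G.Adj u v

/-- The number of edges of a simple graph. -/
noncomputable def numEdges {V : Type*} (G : SimpleGraph V) : ℕ := Nat.card G.edgeSet

noncomputable instance (n : ℕ) :
    DecidablePred (fun G : SimpleGraph (Fin n) => IsClusterGraph G) :=
  fun _ => Classical.propDecidable _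

/-!
Taking connected components is a bijection from cluster graphs on `V` onto set partitions of `V`,
inverse to turning every block into a clique, and the cluster graph of `P` has
`∑_{S ∈ P} C(|S|, 2)` edges. As `p ^ e (1 - p) ^ (C(n,2) - e) = (1 - p) ^ C(n,2) · w ^ e`, the
probability is `(1 - p) ^ C(n,2)` times `∑_P ∏_{S ∈ P} w ^ C(|S|, 2)`.
-/

open Finset SimpleGraph

lemma numEdges_eq_card_edgeFinset {V : Type*} (G : SimpleGraph V) [Fintype G.edgeSet] :
    numEdges G = #G.edgeFinset := by
  rw [numEdges, Nat.card_eq_fintype_card, edgeFinset_card]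

lemma numEdges_le_choose_two {V : Type*} [Fintype V] (G : SimpleGraph V) :
    numEdges G ≤ (Fintype.card V).choose 2 := by
  classical
  rw [numEdges_eq_card_edgeFinset, ← card_univ]
  exact G.card_edgeFinset_le_card_choose_two

namespace Finpartition

variable {α : Type*} [DecidableEq α] {s : Finset α}

lemma parts_eq_image_part (P : Finpartition s) : P.parts = s.image P.part := by
  ext t
  refine ⟨fun ht => ?_, ?_⟩
  · obtain ⟨a, ha, rfl⟩ := P.part_surjOn ht
    exact mem_image_of_mem _ ha
  · rw [mem_image]
    rintro ⟨a, ha, rfl⟩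
    exact P.part_mem.2 ha

lemma ext_part {P Q : Finpartition s} (h : ∀ a ∈ s, P.part a = Q.part a) : P = Q := by
  ext1
  rw [parts_eq_image_part, parts_eq_image_part]
  exact image_congr h

variable {V : Type*} [Fintype V] [DecidableEq V]

def clusterGraph (P : Finpartition (univ : Finset V)) : SimpleGraph V where
  Adj u v := u ≠ v ∧ P.part u = P.part v
  symm := ⟨fun _ _ h => ⟨h.1.symm, h.2.symm⟩⟩
  loopless := ⟨fun _ h => h.1 rfl⟩

variable (P : Finpartition (univ : Finset V))

@[simp]
lemma clusterGraph_adj {u v : V} : P.clusterGraph.Adj u v ↔ u ≠ v ∧ P.part u = P.part v :=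
  Iff.rfl

lemma reachable_clusterGraph_iff {u v : V} :
    P.clusterGraph.Reachable u v ↔ P.part u = P.part v := by
  refine ⟨fun h => ?_, fun h => ?_⟩
  · obtain ⟨walk⟩ := h
    induction walk with
    | nil => rfl
    | cons hadj _ ih => exact ((P.clusterGraph_adj).1 hadj).2.trans ih
  · rcases eq_or_ne u v with rfl | hne
    · rfl
    · exact Adj.reachable ⟨hne, h⟩

lemma isClusterGraph_clusterGraph : IsClusterGraph P.clusterGraph :=
  fun _ _ hreach hne => ⟨hne, (P.reachable_clusterGraph_iff).1 hreach⟩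

lemma neighborFinset_clusterGraph [DecidableRel P.clusterGraph.Adj] (v : V) :
    P.clusterGraph.neighborFinset v = (P.part v).erase v := by
  ext u
  rw [mem_neighborFinset, clusterGraph_adj, mem_erase,
    P.mem_part_iff_part_eq_part (mem_univ u) (mem_univ v)]
  exact ⟨fun h => ⟨h.1.symm, h.2.symm⟩, fun h => ⟨Ne.symm h.1, h.2.symm⟩⟩

lemma degree_clusterGraph [DecidableRel P.clusterGraph.Adj] (v : V) :
    P.clusterGraph.degree v = #(P.part v) - 1 := by
  rw [← card_neighborFinset_eq_degree, neighborFinset_clusterGraph,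
    card_erase_of_mem (P.mem_part (mem_univ v))]

lemma sum_degree_clusterGraph [DecidableRel P.clusterGraph.Adj] :
    ∑ v, P.clusterGraph.degree v = ∑ S ∈ P.parts, #S * (#S - 1) := by
  calc ∑ v, P.clusterGraph.degree v
      = ∑ v ∈ P.parts.biUnion id, (#(P.part v) - 1) := by
        rw [P.biUnion_parts]
        exact sum_congr rfl fun v _ => P.degree_clusterGraph v
    _ = ∑ S ∈ P.parts, ∑ v ∈ S, (#(P.part v) - 1) :=
        sum_biUnion P.supIndep.pairwiseDisjoint
    _ = ∑ S ∈ P.parts, #S * (#S - 1) := by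
        refine sum_congr rfl fun S hS => ?_
        rw [sum_congr rfl fun v hv => by rw [P.part_eq_of_mem hS hv], sum_const, smul_eq_mul]

lemma numEdges_clusterGraph : numEdges P.clusterGraph = ∑ S ∈ P.parts, (#S).choose 2 := by
  classical
  have hsum := P.clusterGraph.sum_degrees_eq_twice_card_edges
  rw [sum_degree_clusterGraph] at hsum
  have hchoose : ∑ S ∈ P.parts, #S * (#S - 1) = 2 * ∑ S ∈ P.parts, (#S).choose 2 := by
    rw [mul_sum]
    refine sum_congr rfl fun S _ => ?_
    rw [Nat.choose_two_right, Nat.two_mul_div_two_of_even (Nat.even_mul_pred_self _)]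
  rw [numEdges_eq_card_edgeFinset]
  omega

end Finpartition

namespace SimpleGraph

variable {V : Type*} [Fintype V] [DecidableEq V]

noncomputable def componentFinpartition (G : SimpleGraph V) : Finpartition (univ : Finset V) :=
  open Classical in Finpartition.ofSetoid G.reachableSetoid

lemma mem_part_componentFinpartition_iff {G : SimpleGraph V} {u v : V} :
    v ∈ G.componentFinpartition.part u ↔ G.Reachable u v :=
  open Classical in Finpartition.mem_part_ofSetoid_iff_rel

lemma part_componentFinpartition_eq_iff {G : SimpleGraph V} {u v : V} :
    G.componentFinpartition.part u = G.componentFinpartition.part v ↔ G.Reachable u v := by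
  rw [← Finpartition.mem_part_iff_part_eq_part _ (mem_univ u) (mem_univ v),
    mem_part_componentFinpartition_iff, reachable_comm]

lemma componentFinpartition_clusterGraph (P : Finpartition (univ : Finset V)) :
    P.clusterGraph.componentFinpartition = P :=
  Finpartition.ext_part fun u _ => by
    ext v
    rw [mem_part_componentFinpartition_iff, Finpartition.reachable_clusterGraph_iff,
      P.mem_part_iff_part_eq_part (mem_univ v) (mem_univ u), eq_comm]

end SimpleGraph

lemma IsClusterGraph.clusterGraph_componentFinpartition {V : Type*} [Fintype V] [DecidableEq V]
    {G : SimpleGraph V} (hG : IsClusterGraph G) : G.componentFinpartition.clusterGraph = G := by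
  ext u v
  rw [Finpartition.clusterGraph_adj, SimpleGraph.part_componentFinpartition_eq_iff]
  exact ⟨fun h => hG u v h.2 h.1, fun h => ⟨h.ne, h.reachable⟩⟩

lemma sum_filter_isClusterGraph {V M : Type*} [Fintype V] [DecidableEq V] [AddCommMonoid M]
    [DecidablePred (IsClusterGraph : SimpleGraph V → Prop)] (f : SimpleGraph V → M) :
    ∑ G ∈ univ.filter IsClusterGraph, f G = ∑ P : Finpartition (univ : Finset V), f P.clusterGraph :=
  sum_nbij' SimpleGraph.componentFinpartition Finpartition.clusterGraph
    (fun _ _ => mem_univ _)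
    (fun P _ => mem_filter.2 ⟨mem_univ _, P.isClusterGraph_clusterGraph⟩)
    (fun _ hG => (mem_filter.1 hG).2.clusterGraph_componentFinpartition)
    (fun P _ => SimpleGraph.componentFinpartition_clusterGraph P)
    (fun _ hG => by rw [(mem_filter.1 hG).2.clusterGraph_componentFinpartition])

lemma pow_mul_one_sub_pow_sub_eq {K : Type*} [Field K] {p : K} (hp : p ≠ 1) {k N : ℕ}
    (hk : k ≤ N) : p ^ k * (1 - p) ^ (N - k) = (1 - p) ^ N * (p / (1 - p)) ^ k := by
  have hq : 1 - p ≠ 0 := sub_ne_zero.2 hp.symm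
  rw [div_pow, pow_sub₀ _ hq hk]
  field_simp

/-- the Erdős–Rényi probability of being a cluster graph equals
`(1-p)^{C(n,2)} · B_n(w)` with `w = p/(1-p)`. -/
theorem er_prob_clusterGraph (n : ℕ) (p : ℝ) (hp : p ∈ Set.Ioo (0 : ℝ) 1) :
    ∑ G ∈ Finset.univ.filter (fun G : SimpleGraph (Fin n) => IsClusterGraph G),
        p ^ numEdges G * (1 - p) ^ (n.choose 2 - numEdges G)
      = (1 - p) ^ n.choose 2 * genBell n (p / (1 - p)) := by
  calc _ = ∑ G ∈ univ.filter (fun G : SimpleGraph (Fin n) => IsClusterGraph G),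
        (1 - p) ^ n.choose 2 * (p / (1 - p)) ^ numEdges G :=
        sum_congr rfl fun G _ => pow_mul_one_sub_pow_sub_eq hp.2.ne
          (by simpa using numEdges_le_choose_two G)
    _ = (1 - p) ^ n.choose 2 * ∑ P : Finpartition (univ : Finset (Fin n)),
        (p / (1 - p)) ^ ∑ S ∈ P.parts, (#S).choose 2 := by
        rw [← mul_sum, sum_filter_isClusterGraph]
        simp only [Finpartition.numEdges_clusterGraph]
    _ = _ := by simp only [genBell, prod_pow_eq_pow_sum]
end

section
/- For w ∈ (0,1], the sequence n ↦ B_n(w) is log-convex: B_{n-1}(w)^2 ≤ B_n(w) · B_{n-2}(w) for all n ≥ 2. -/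
/-!
Splitting off the block that contains a fixed point gives
`B_{n+1} = ∑_k C(n,k) w^{C(k+1,2)} B_{n-k}`, i.e. `u_n = B_n / n!` satisfies
`(n+1) u_{n+1} = ∑_k g_k u_{n-k}` with `g_k = w^{C(k+1,2)} / k!`. For `0 < w ≤ 1` the sequence `g`
is positive, nonincreasing and log-concave, and this forces `u` to be log-concave: by strong
induction, `(n+1)² (u_{n+1}² - u_{n+2} u_n)` equals `u_n (u_{n+1} - u_{n+2})` plus a double sum
pairing the `2 × 2` minors of `g` with those of `u`, which is nonnegative after symmetrising.
Feeding log-concavity of `u` back into the recursion gives `(n+1) u_{n+1}² ≤ (n+2) u_{n+2} u_n`,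
which is `B_{n+1}² ≤ B_{n+2} B_n`.
-/

open Finset

/-- The Bell number: number of set partitions of an `n`-element set. -/
noncomputable def Bell (n : ℕ) : ℕ := Nat.card (Finpartition (Finset.univ : Finset (Fin n)))

section Combinatorics

variable {α : Type*} [DecidableEq α]

noncomputable def genBellOn (w : ℝ) (s : Finset α) : ℝ :=
  ∑ P : Finpartition s, ∏ S ∈ P.parts, w ^ (#S).choose 2

lemma Finpartition.parts_avoid_of_mem {s B : Finset α} (P : Finpartition s) (hB : B ∈ P.parts) :
    (P.avoid B).parts = P.parts.erase B := by
  ext C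
  rw [Finpartition.mem_avoid, mem_erase]
  constructor
  · rintro ⟨D, hD, hDB, rfl⟩
    have hne : D ≠ B := by rintro rfl; exact hDB le_rfl
    have hdisj : Disjoint D B := P.disjoint hD hB hne
    rw [sdiff_eq_self_of_disjoint hdisj]
    exact ⟨hne, hD⟩
  · rintro ⟨hne, hC⟩
    have hdisj : Disjoint C B := P.disjoint hC hB hne
    refine ⟨C, hC, fun hCB => P.ne_bot hC (hdisj.eq_bot_of_le hCB), sdiff_eq_self_of_disjoint hdisj⟩

lemma Finpartition.sigma_mk_eq {t T T' : Finset α} {Q : Finpartition (t \ T)}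
    {Q' : Finpartition (t \ T')} (hT : T = T') (hQ : Q.parts = Q'.parts) :
    (⟨T, Q⟩ : Σ T : Finset α, Finpartition (t \ T)) = ⟨T', Q'⟩ := by
  subst hT
  rw [Finpartition.ext hQ]

section Insert

variable {a : α} {t T : Finset α}

def Finpartition.extendByBlock (ha : a ∉ t) (hT : T ⊆ t) (Q : Finpartition (t \ T)) :
    Finpartition (insert a t) :=
  Q.extend (insert_ne_empty a T)
    (disjoint_insert_right.2 ⟨fun h => ha (mem_sdiff.1 h).1, sdiff_disjoint⟩)
    (by rw [sup_eq_union, union_insert, sdiff_union_of_subset hT])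

lemma Finpartition.parts_extendByBlock (ha : a ∉ t) (hT : T ⊆ t) (Q : Finpartition (t \ T)) :
    (Q.extendByBlock ha hT).parts = insert (insert a T) Q.parts :=
  rfl

lemma Finpartition.insert_mem_parts_extendByBlock (ha : a ∉ t) (hT : T ⊆ t)
    (Q : Finpartition (t \ T)) : insert a T ∈ (Q.extendByBlock ha hT).parts :=
  mem_insert_self _ _

lemma Finpartition.insert_notMem_parts (ha : a ∉ t) (Q : Finpartition (t \ T)) :
    insert a T ∉ Q.parts := fun h => ha (mem_sdiff.1 (Q.le h (mem_insert_self a T))).1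

lemma Finpartition.part_extendByBlock (ha : a ∉ t) (hT : T ⊆ t) (Q : Finpartition (t \ T)) :
    (Q.extendByBlock ha hT).part a = insert a T :=
  Finpartition.part_eq_of_mem _ (Q.insert_mem_parts_extendByBlock ha hT) (mem_insert_self a T)

lemma Finpartition.insert_sdiff_part (ha : a ∉ t) (P : Finpartition (insert a t)) :
    insert a t \ P.part a = t \ (P.part a).erase a := by
  have := P.mem_part_self.2 (mem_insert_self a t)
  grind

lemma genBellOn_insert (w : ℝ) (ha : a ∉ t) :
    genBellOn w (insert a t) = ∑ T ∈ t.powerset, w ^ (#T + 1).choose 2 * genBellOn w (t \ T) := by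
  simp only [genBellOn, mul_sum]
  rw [sum_sigma']
  refine (sum_bij'
    (fun x hx => x.2.extendByBlock ha (mem_powerset.1 (mem_sigma.1 hx).1))
    (fun P _ => ⟨(P.part a).erase a, (P.avoid (P.part a)).copy (P.insert_sdiff_part ha)⟩)
    (fun _ _ => mem_univ _) ?_ ?_ ?_ ?_).symm
  · intro P _
    refine mem_sigma.2 ⟨mem_powerset.2 ?_, mem_univ _⟩
    have := P.part_subset a
    grind
  · rintro ⟨T, Q⟩ hx
    have hT := mem_powerset.1 (mem_sigma.1 hx).1
    have hpart := Q.part_extendByBlock ha hT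
    refine Finpartition.sigma_mk_eq (by rw [hpart, erase_insert fun h => ha (hT h)]) ?_
    rw [Finpartition.copy_parts, hpart,
      Finpartition.parts_avoid_of_mem _ (Q.insert_mem_parts_extendByBlock ha hT),
      Finpartition.parts_extendByBlock, erase_insert (Q.insert_notMem_parts ha)]
  · intro P _
    apply Finpartition.ext
    have hmem := P.part_mem.2 (mem_insert_self a t)
    rw [Finpartition.parts_extendByBlock, Finpartition.copy_parts, P.parts_avoid_of_mem hmem,
      insert_erase (P.mem_part_self.2 (mem_insert_self a t)), insert_erase hmem]
  · rintro ⟨T, Q⟩ hx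
    have hT := mem_powerset.1 (mem_sigma.1 hx).1
    rw [Finpartition.parts_extendByBlock, prod_insert (Q.insert_notMem_parts ha),
      card_insert_of_notMem fun h => ha (hT h)]

end Insert

lemma genBellOn_empty (w : ℝ) : genBellOn w (∅ : Finset α) = 1 := by
  rw [genBellOn, ← bot_eq_empty, Fintype.sum_unique, Finpartition.parts_eq_empty_iff.2 rfl,
    prod_empty]

noncomputable def genBellSeq (w : ℝ) : ℕ → ℝ
  | 0 => 1
  | n + 1 => ∑ k ∈ range (n + 1), n.choose k * (w ^ (k + 1).choose 2 * genBellSeq w (n - k))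

lemma genBellOn_eq_genBellSeq (w : ℝ) (s : Finset α) : genBellOn w s = genBellSeq w #s := by
  induction s using Finset.strongInduction with
  | H s ih =>
  rcases s.eq_empty_or_nonempty with rfl | ⟨a, ha⟩
  · rw [genBellOn_empty, card_empty, genBellSeq]
  have ha' := notMem_erase a s
  rw [← insert_erase ha, genBellOn_insert w ha', card_insert_of_notMem ha', genBellSeq]
  simp only [← nsmul_eq_mul, ← sum_powerset_apply_card]
  refine sum_congr rfl fun T hT => ?_
  rw [ih _ (sdiff_subset.trans_ssubset (erase_ssubset ha)),
    card_sdiff_of_subset (mem_powerset.1 hT)]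

end Combinatorics

lemma genBell_eq_genBellSeq (n : ℕ) (w : ℝ) : genBell n w = genBellSeq w n :=
  (genBellOn_eq_genBellSeq w (univ : Finset (Fin n))).trans (by rw [card_univ, Fintype.card_fin])

lemma Finset.sum_sum_nonneg_of_add_swap_nonneg {ι M : Type*} [AddCommGroup M] [LinearOrder M]
    [IsOrderedAddMonoid M] {s : Finset ι} {F : ι → ι → M}
    (hF : ∀ i ∈ s, ∀ j ∈ s, 0 ≤ F i j + F j i) : 0 ≤ ∑ i ∈ s, ∑ j ∈ s, F i j := by
  have hdouble : 0 ≤ (∑ i ∈ s, ∑ j ∈ s, F i j) + ∑ i ∈ s, ∑ j ∈ s, F i j := by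
    nth_rewrite 2 [sum_comm]
    simp only [← sum_add_distrib]
    exact sum_nonneg fun i hi => sum_nonneg fun j hj => hF i hi j hj
  by_contra! hneg
  exact (add_neg hneg hneg).not_ge hdouble

lemma succ_mul_le_mul_succ_of_logConcave {u : ℕ → ℝ} (hu : ∀ i, 0 < u i) {p q : ℕ}
    (hlc : ∀ m < q, u (m + 2) * u m ≤ u (m + 1) ^ 2) (hpq : p ≤ q) :
    u (q + 1) * u p ≤ u q * u (p + 1) := by
  induction q, hpq using Nat.le_induction with
  | base => rw [mul_comm]
  | succ q hpq ih =>
    have hstep := hlc q (by omega)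
    have hprev := ih fun m hm => hlc m (by omega)
    refine le_of_mul_le_mul_left ?_ (mul_pos (hu (q + 1)) (hu q))
    calc u (q + 1) * u q * (u (q + 1 + 1) * u p)
        = (u (q + 2) * u q) * (u (q + 1) * u p) := by ring
      _ ≤ u (q + 1) ^ 2 * (u q * u (p + 1)) :=
        mul_le_mul hstep hprev (mul_pos (hu _) (hu _)).le (sq_nonneg _)
      _ = u (q + 1) * u q * (u (q + 1) * u (p + 1)) := by ring

lemma sum_sum_minor_mul_nonneg {g a b : ℕ → ℝ} {N : ℕ}
    (hg : ∀ k j, k ≤ j → g (j + 1) * g k ≤ g j * g (k + 1))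
    (hab : ∀ k j, k ≤ j → j ≤ N → a k * b j ≤ a j * b k) :
    0 ≤ ∑ j ∈ range (N + 1), ∑ k ∈ range (N + 1),
      (g j * g (k + 1) - g (j + 1) * g k) * (a j * b k) := by
  refine sum_sum_nonneg_of_add_swap_nonneg fun j hj k hk => ?_
  rw [mem_range] at hj hk
  have hswap : (g j * g (k + 1) - g (j + 1) * g k) * (a j * b k)
      + (g k * g (j + 1) - g (k + 1) * g j) * (a k * b j)
      = (g j * g (k + 1) - g (j + 1) * g k) * (a j * b k - a k * b j) := by ring
  rw [hswap]
  rcases le_total k j with hkj | hjk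
  · exact mul_nonneg (sub_nonneg.2 (by linarith [hg k j hkj]))
      (sub_nonneg.2 (hab k j hkj (by omega)))
  · exact mul_nonneg_of_nonpos_of_nonpos (sub_nonpos.2 (by linarith [hg j k hjk]))
      (sub_nonpos.2 (hab j k hjk (by omega)))

def prependZero (u : ℕ → ℝ) : ℕ → ℝ
  | 0 => 0
  | i + 1 => u i

/-- `u` are the coefficients of a power series `U` with `U' = G' * U`, where `g` are the
coefficients of `G'`; that is, `U = u 0 * exp G`. -/
def ExpRecursion (g u : ℕ → ℝ) : Prop :=
  ∀ n : ℕ, (n + 1 : ℝ) * u (n + 1) = ∑ k ∈ range (n + 1), g k * u (n - k)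

namespace ExpRecursion

variable {g u : ℕ → ℝ}

lemma pos (hrec : ExpRecursion g u) (hg : ∀ i, 0 < g i) (hu : 0 < u 0) (n : ℕ) : 0 < u n := by
  induction n using Nat.strong_induction_on with
  | _ n ih =>
  rcases n with _ | n
  · exact hu
  have hsum : 0 < ∑ k ∈ range (n + 1), g k * u (n - k) :=
    sum_pos (fun k _ => mul_pos (hg k) (ih _ (by omega))) nonempty_range_add_one
  rw [← hrec n] at hsum
  exact pos_of_mul_pos_right hsum (by positivity)

lemma succ_le (hrec : ExpRecursion g u) (hg0 : g 0 = 1) (hg_anti : ∀ i, g (i + 1) ≤ g i)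
    (hu : ∀ i, 0 ≤ u i) (n : ℕ) : u (n + 2) ≤ u (n + 1) := by
  have hnext := hrec (n + 1)
  rw [sum_range_succ', hg0, one_mul, Nat.sub_zero] at hnext
  have hle : ∑ k ∈ range (n + 1), g (k + 1) * u (n - k)
      ≤ ∑ k ∈ range (n + 1), g k * u (n - k) :=
    sum_le_sum fun k _ => mul_le_mul_of_nonneg_right (hg_anti k) (hu _)
  rw [← hrec n] at hle
  simp only [Nat.add_sub_add_right] at hnext
  push_cast at hnext
  refine le_of_mul_le_mul_left ?_ (by positivity : (0 : ℝ) < n + 2)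
  linarith

lemma mul_eq_sum_prependZero (hrec : ExpRecursion g u) (m : ℕ) :
    (m : ℝ) * u m = ∑ k ∈ range (m + 1), g k * prependZero u (m - k) := by
  rcases m with _ | m
  · simp [prependZero]
  rw [sum_range_succ, Nat.sub_self, prependZero, mul_zero, add_zero, Nat.cast_succ, hrec m]
  refine sum_congr rfl fun k hk => ?_
  rw [Nat.succ_sub (Nat.le_of_lt_succ (mem_range.1 hk)), prependZero]

lemma sq_sub_mul_eq_add_sum_sum (hrec : ExpRecursion g u) (hg0 : g 0 = 1) (n : ℕ) :
    ((n : ℝ) + 1) ^ 2 * (u (n + 1) ^ 2 - u (n + 2) * u n)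
      = u n * (u (n + 1) - u (n + 2)) + ∑ j ∈ range (n + 1), ∑ k ∈ range (n + 1),
          (g j * g (k + 1) - g (j + 1) * g k) * (u (n - j) * prependZero u (n - k)) := by
  -- Padding `u` with a leading zero puts both factors of the double sum on the same square of
  -- indices, which is what the symmetrisation in `sum_sum_minor_mul_nonneg` needs.
  set v := prependZero u
  have hX : ∑ j ∈ range (n + 1), g j * u (n - j) = (n + 1) * u (n + 1) := (hrec n).symm
  have hY : ∑ j ∈ range (n + 1), g (j + 1) * u (n - j) = (n + 2) * u (n + 2) - u (n + 1) := by
    have := hrec (n + 1)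
    rw [sum_range_succ', hg0, one_mul, Nat.sub_zero] at this
    simp only [Nat.add_sub_add_right] at this
    push_cast at this
    linarith
  have hX' : ∑ k ∈ range (n + 1), g (k + 1) * v (n - k) = (n + 1) * u (n + 1) - u n := by
    have := hrec.mul_eq_sum_prependZero (n + 1)
    rw [sum_range_succ', hg0, one_mul, Nat.sub_zero] at this
    simp only [Nat.add_sub_add_right] at this
    push_cast at this
    have hlast : v (n + 1) = u n := rfl
    linarith
  have hY' : ∑ k ∈ range (n + 1), g k * v (n - k) = n * u n :=
    (hrec.mul_eq_sum_prependZero n).symm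
  have hexpand : ∑ j ∈ range (n + 1), ∑ k ∈ range (n + 1),
      (g j * g (k + 1) - g (j + 1) * g k) * (u (n - j) * v (n - k))
      = (∑ j ∈ range (n + 1), g j * u (n - j)) * ∑ k ∈ range (n + 1), g (k + 1) * v (n - k)
        - (∑ j ∈ range (n + 1), g (j + 1) * u (n - j)) * ∑ k ∈ range (n + 1), g k * v (n - k) := by
    simp only [sum_mul_sum, ← sum_sub_distrib]
    exact sum_congr rfl fun j _ => sum_congr rfl fun k _ => by ring
  rw [hexpand, hX, hY, hX', hY']
  ring

lemma logConcave (hrec : ExpRecursion g u) (hg : ∀ i, 0 < g i) (hg0 : g 0 = 1)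
    (hg_anti : ∀ i, g (i + 1) ≤ g i) (hg_lc : ∀ i, g (i + 2) * g i ≤ g (i + 1) ^ 2)
    (hu0 : 0 < u 0) (n : ℕ) : u (n + 2) * u n ≤ u (n + 1) ^ 2 := by
  have hu := hrec.pos hg hu0
  induction n using Nat.strong_induction_on with
  | _ n ih =>
  have hcross : ∀ p q, p ≤ q → q ≤ n → u q * prependZero u p ≤ u p * prependZero u q := by
    rintro (_ | p) (_ | q) hpq hqn
    · rfl
    · show u (q + 1) * 0 ≤ u 0 * u q
      rw [mul_zero]
      exact (mul_pos (hu 0) (hu q)).le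
    · omega
    · have := succ_mul_le_mul_succ_of_logConcave hu (fun m hm => ih m (by omega)) (by omega : p ≤ q)
      show u (q + 1) * u p ≤ u (p + 1) * u q
      linarith
  have hsum := sum_sum_minor_mul_nonneg (g := g) (a := fun j => u (n - j))
    (b := fun k => prependZero u (n - k)) (N := n)
    (fun k j hkj => succ_mul_le_mul_succ_of_logConcave hg (fun m _ => hg_lc m) hkj)
    (fun k j hkj hjn => hcross (n - j) (n - k) (by omega) (by omega))
  have hid := hrec.sq_sub_mul_eq_add_sum_sum hg0 n
  have hdec := hrec.succ_le hg0 hg_anti (fun i => (hu i).le) n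
  have hn : (0 : ℝ) < (n + 1) ^ 2 := by positivity
  nlinarith [mul_le_mul_of_nonneg_left hdec (hu n).le]

lemma mul_sq_le (hrec : ExpRecursion g u) (hg : ∀ i, 0 < g i) (hg0 : g 0 = 1)
    (hg_anti : ∀ i, g (i + 1) ≤ g i) (hg_lc : ∀ i, g (i + 2) * g i ≤ g (i + 1) ^ 2)
    (hu0 : 0 < u 0) (n : ℕ) : (n + 1 : ℝ) * u (n + 1) ^ 2 ≤ (n + 2) * (u (n + 2) * u n) := by
  have hu := hrec.pos hg hu0
  have hlc := hrec.logConcave hg hg0 hg_anti hg_lc hu0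
  calc (n + 1 : ℝ) * u (n + 1) ^ 2 = ∑ k ∈ range (n + 1), g k * (u (n - k) * u (n + 1)) := by
        rw [sq, ← mul_assoc, hrec n, sum_mul]
        exact sum_congr rfl fun k _ => by ring
    _ ≤ ∑ k ∈ range (n + 1), g k * (u (n + 1 - k) * u n) := by
        refine sum_le_sum fun k hk => mul_le_mul_of_nonneg_left ?_ (hg k).le
        have hk : k ≤ n := Nat.le_of_lt_succ (mem_range.1 hk)
        rw [Nat.sub_add_comm hk, mul_comm (u (n - k)), mul_comm (u (n - k + 1))]
        exact succ_mul_le_mul_succ_of_logConcave hu (fun m _ => hlc m) (Nat.sub_le n k)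
    _ ≤ ∑ k ∈ range (n + 2), g k * (u (n + 1 - k) * u n) := by
        rw [sum_range_succ _ (n + 1)]
        exact le_add_of_nonneg_right (mul_pos (hg _) (mul_pos (hu _) (hu _))).le
    _ = (n + 2) * (u (n + 2) * u n) := by
        have := hrec (n + 1)
        push_cast at this
        rw [← mul_assoc, show (n : ℝ) + 2 = n + 1 + 1 by ring, this, sum_mul]
        exact sum_congr rfl fun k _ => by ring

end ExpRecursion

open Nat

noncomputable def blockCoeff (w : ℝ) (i : ℕ) : ℝ := w ^ (i + 1).choose 2 / i !

section BlockCoeff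

variable {w : ℝ}

lemma blockCoeff_zero : blockCoeff w 0 = 1 := by simp [blockCoeff]

lemma blockCoeff_succ (i : ℕ) :
    blockCoeff w (i + 1) = blockCoeff w i * (w ^ (i + 1) / (i + 1)) := by
  rw [blockCoeff, blockCoeff, choose_succ_succ' (i + 1), choose_one_right, pow_add,
    factorial_succ]
  push_cast
  field_simp

lemma blockCoeff_pos (hw : 0 < w) (i : ℕ) : 0 < blockCoeff w i := by
  unfold blockCoeff
  positivity

lemma antitone_pow_succ_div_succ (hw0 : 0 < w) (hw1 : w ≤ 1) :
    Antitone fun i : ℕ => w ^ (i + 1) / (i + 1 : ℝ) := fun i j hij =>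
  div_le_div₀ (by positivity) (pow_le_pow_of_le_one hw0.le hw1 (by omega)) (by positivity)
    (by exact_mod_cast Nat.succ_le_succ hij)

lemma blockCoeff_succ_le (hw0 : 0 < w) (hw1 : w ≤ 1) (i : ℕ) :
    blockCoeff w (i + 1) ≤ blockCoeff w i := by
  rw [blockCoeff_succ]
  refine mul_le_of_le_one_right (blockCoeff_pos hw0 i).le ?_
  rw [div_le_one (by positivity)]
  exact (pow_le_one₀ hw0.le hw1).trans (le_add_of_nonneg_left i.cast_nonneg)

lemma blockCoeff_logConcave (hw0 : 0 < w) (hw1 : w ≤ 1) (i : ℕ) :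
    blockCoeff w (i + 2) * blockCoeff w i ≤ blockCoeff w (i + 1) ^ 2 := by
  rw [blockCoeff_succ (i + 1), sq]
  nth_rewrite 3 [blockCoeff_succ]
  have := mul_pos (blockCoeff_pos hw0 (i + 1)) (blockCoeff_pos hw0 i)
  have hratio : w ^ (i + 1 + 1) / ((i + 1 : ℕ) + 1 : ℝ) ≤ w ^ (i + 1) / (i + 1) :=
    antitone_pow_succ_div_succ hw0 hw1 (Nat.le_succ i)
  nlinarith [mul_le_mul_of_nonneg_left hratio this.le]

end BlockCoeff

lemma expRecursion_genBellSeq (w : ℝ) :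
    ExpRecursion (blockCoeff w) (fun n => genBellSeq w n / n !) := by
  intro n
  dsimp only
  rw [genBellSeq, factorial_succ, sum_div, mul_sum]
  refine sum_congr rfl fun k hk => ?_
  have hk : k ≤ n := Nat.le_of_lt_succ (mem_range.1 hk)
  rw [blockCoeff, cast_choose ℝ hk]
  push_cast
  field_simp

lemma genBellSeq_sq_le (w : ℝ) (hw0 : 0 < w) (hw1 : w ≤ 1) (n : ℕ) :
    genBellSeq w (n + 1) ^ 2 ≤ genBellSeq w (n + 2) * genBellSeq w n := by
  have h := (expRecursion_genBellSeq w).mul_sq_le (blockCoeff_pos hw0) blockCoeff_zero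
    (blockCoeff_succ_le hw0 hw1) (blockCoeff_logConcave hw0 hw1) (by simp [genBellSeq]) n
  simp only [factorial_succ] at h
  push_cast at h
  field_simp at h
  refine le_of_mul_le_mul_left ?_ (by positivity : (0 : ℝ) < n + 2)
  linarith

/-- for `w ∈ (0,1]`, `n ↦ B_n(w)` is log-convex. -/
theorem genBell_log_convex (w : ℝ) (hw : w ∈ Set.Ioc (0 : ℝ) 1) (n : ℕ) (hn : 2 ≤ n) :
    genBell (n - 1) w ^ 2 ≤ genBell n w * genBell (n - 2) w := by
  obtain ⟨m, rfl⟩ := Nat.exists_eq_add_of_le' hn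
  simp only [genBell_eq_genBellSeq, Nat.add_sub_cancel]
  exact genBellSeq_sq_le w hw.1 hw.2 m
end

section
/- Let t_n = log(p_n/(1-p_n)) with t_n ~ −α log n for some α > 0. Then for the random cluster graph CG_{n,p_n}, the block size S_{n,p_n} of a random vertex satisfies P(S_{n,p_n} ≥ 8/α + 1) ≤ 1/n for all sufficiently large n; in particular S_{n,p_n} < 8/α + 1 with high probability. -/
/-!
Since `C(n-1, s-1) ≤ n^(s-1)` and `B_{n-s}(w) ≤ B_n(w)` (a partition of a smaller set extends by
singletons without changing its weight), `P(S_{n,p} = s) ≤ n^(s-1) w^C(s,2)`. Eventually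
`w ≤ n^(-3α/4)`, and for `s ≥ 8/α + 1` the exponent `(s - 1) - (3α/4) C(s,2)` is at most `-2`, so
each of the at most `n` terms of the tail is at most `n⁻²`.
-/

open Finset

/-- `P(S_{n,p} = s)`: the probability that the clique of a uniformly random vertex of the
random cluster graph `CG_{n,p}` has size `s`, where `w = p/(1-p)`. -/
noncomputable def probBlockSize (n s : ℕ) (w : ℝ) : ℝ :=
  ((n - 1).choose (s - 1) : ℝ) * w ^ s.choose 2 * genBell (n - s) w / genBell n w

open Filter

namespace Finpartition

variable {α β : Type*} [DecidableEq α] [DecidableEq β] {s u : Finset α}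

def mapEmbedding (f : α ↪ β) (P : Finpartition s) : Finpartition (s.map f) where
  parts := P.parts.map (Finset.mapEmbedding f).toEmbedding
  supIndep := by
    rw [Finset.supIndep_iff_pairwiseDisjoint, coe_map]
    rintro _ ⟨a, ha, rfl⟩ _ ⟨b, hb, rfl⟩ hab
    exact (disjoint_map f).2 (P.disjoint ha hb (ne_of_apply_ne _ hab))
  sup_parts := by
    conv_rhs => rw [← P.sup_parts]
    rw [sup_map, Finset.apply_sup_eq_sup_comp (Finset.map f) (fun _ _ => Finset.map_union ..)
      (Finset.map_empty f)]
    rfl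
  bot_notMem := by simp

theorem parts_mapEmbedding (f : α ↪ β) (P : Finpartition s) :
    (P.mapEmbedding f).parts = P.parts.map (Finset.mapEmbedding f).toEmbedding := rfl

theorem mapEmbedding_injective (f : α ↪ β) :
    Function.Injective (mapEmbedding (s := s) f) := fun _ _ h =>
  Finpartition.ext (map_injective _ (congrArg parts h))

theorem prod_mapEmbedding_parts {M : Type*} [CommMonoid M] (f : α ↪ β) (P : Finpartition s)
    (g : ℕ → M) : ∏ S ∈ (P.mapEmbedding f).parts, g #S = ∏ S ∈ P.parts, g #S := by
  simp [parts_mapEmbedding, prod_map]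

def disjUnion (P : Finpartition s) (Q : Finpartition u) (h : Disjoint s u) :
    Finpartition (s ∪ u) where
  parts := P.parts ∪ Q.parts
  supIndep := by
    rw [Finset.supIndep_iff_pairwiseDisjoint, coe_union, Set.pairwiseDisjoint_union]
    exact ⟨P.disjoint, Q.disjoint, fun _ ha _ hb _ => h.mono (P.le ha) (Q.le hb)⟩
  sup_parts := by rw [sup_union, P.sup_parts, Q.sup_parts]; rfl
  bot_notMem := by simp

theorem disjoint_parts_of_disjoint (P : Finpartition s) (Q : Finpartition u) (h : Disjoint s u) :
    Disjoint P.parts Q.parts :=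
  Finset.disjoint_left.2 fun _ haP haQ =>
    P.ne_bot haP ((h.mono (P.le haP) (Q.le haQ)).eq_bot_of_le le_rfl)

theorem disjUnion_left_injective (Q : Finpartition u) (h : Disjoint s u) :
    Function.Injective fun P : Finpartition s => P.disjUnion Q h := fun P P' hPP' => by
  ext1
  rw [← union_sdiff_cancel_right (P.disjoint_parts_of_disjoint Q h),
    ← union_sdiff_cancel_right (P'.disjoint_parts_of_disjoint Q h)]
  exact congrArg (fun R : Finpartition (s ∪ u) => R.parts \ Q.parts) hPP'

theorem prod_disjUnion_parts {M : Type*} [CommMonoid M] (P : Finpartition s) (Q : Finpartition u)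
    (h : Disjoint s u) (g : Finset α → M) :
    ∏ S ∈ (P.disjUnion Q h).parts, g S = (∏ S ∈ P.parts, g S) * ∏ S ∈ Q.parts, g S :=
  prod_union (P.disjoint_parts_of_disjoint Q h)

theorem prod_bot_parts {M : Type*} [CommMonoid M] (g : ℕ → M) (hg : g 1 = 1) :
    ∏ S ∈ (⊥ : Finpartition s).parts, g #S = 1 := by
  simp [parts_bot, prod_map, hg]

variable {t : Finset β}

def extendAlong (f : α ↪ β) (h : s.map f ⊆ t) : Finpartition s ↪ Finpartition t where
  toFun P := ((P.mapEmbedding f).disjUnion ⊥ disjoint_sdiff).copy (union_sdiff_of_subset h)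
  inj' _ _ hPQ := mapEmbedding_injective f <| disjUnion_left_injective ⊥ disjoint_sdiff <|
    Finpartition.ext (congrArg parts hPQ :)

theorem prod_extendAlong_parts {M : Type*} [CommMonoid M] (f : α ↪ β) (h : s.map f ⊆ t)
    (P : Finpartition s) (g : ℕ → M) (hg : g 1 = 1) :
    ∏ S ∈ (extendAlong f h P).parts, g #S = ∏ S ∈ P.parts, g #S := by
  change ∏ S ∈ ((P.mapEmbedding f).disjUnion ⊥ disjoint_sdiff).parts, g #S = _
  rw [prod_disjUnion_parts, prod_bot_parts g hg, mul_one, prod_mapEmbedding_parts]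

end Finpartition

theorem genBell_pos (n : ℕ) {w : ℝ} (hw : 0 < w) : 0 < genBell n w :=
  sum_pos (fun _ _ => prod_pos fun _ _ => pow_pos hw _) ⟨⊥, mem_univ _⟩

theorem genBell_mono {m n : ℕ} (h : m ≤ n) {w : ℝ} (hw : 0 ≤ w) :
    genBell m w ≤ genBell n w := by
  let e := Finpartition.extendAlong (Fin.castLEEmb h) (subset_univ (univ.map _))
  calc genBell m w = ∑ P ∈ univ.map e, ∏ S ∈ P.parts, w ^ (#S).choose 2 := by
        rw [sum_map]
        exact sum_congr rfl fun P _ =>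
          (Finpartition.prod_extendAlong_parts _ _ P (fun k => w ^ k.choose 2) (by simp)).symm
    _ ≤ genBell n w :=
        sum_le_sum_of_subset_of_nonneg (subset_univ _) fun _ _ _ => prod_nonneg fun _ _ => by
          positivity

theorem probBlockSize_le {n s : ℕ} {w : ℝ} (hw : 0 < w) :
    probBlockSize n s w ≤ (n : ℝ) ^ (s - 1) * w ^ s.choose 2 := by
  have hchoose : ((n - 1).choose (s - 1) : ℝ) ≤ (n : ℝ) ^ (s - 1) := by
    exact_mod_cast (Nat.choose_le_pow _ _).trans (Nat.pow_le_pow_left (Nat.sub_le n 1) _)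
  rw [probBlockSize, div_le_iff₀ (genBell_pos n hw)]
  gcongr
  · exact (genBell_pos _ hw).le
  · exact genBell_mono (Nat.sub_le n s) hw.le

theorem pow_mul_pow_le_inv_sq {x w β : ℝ} (hx : 1 ≤ x) (hw0 : 0 ≤ w) (hw : w ≤ x ^ (-β))
    {k m : ℕ} (hkm : k + 2 ≤ β * m) : x ^ k * w ^ m ≤ (x ^ 2)⁻¹ := by
  have hx0 : 0 ≤ x := zero_le_one.trans hx
  calc x ^ k * w ^ m ≤ x ^ (k : ℝ) * x ^ (-β * m) := by
        rw [Real.rpow_natCast, Real.rpow_mul hx0, Real.rpow_natCast]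
        gcongr
    _ = x ^ ((k : ℝ) - β * m) := by rw [← Real.rpow_add (by linarith)]; ring_nf
    _ ≤ x ^ (-2 : ℝ) := Real.rpow_le_rpow_of_exponent_le hx (by linarith)
    _ = (x ^ 2)⁻¹ := by rw [Real.rpow_neg hx0, Real.rpow_ofNat]

theorem sub_one_add_two_le_mul_choose_two {α : ℝ} (hα : 0 < α) {s : ℕ} (hs : 8 / α + 1 ≤ s) :
    ((s - 1 : ℕ) : ℝ) + 2 ≤ 3 * α / 4 * (s.choose 2 : ℕ) := by
  have hs8 : 8 ≤ α * (s - 1) := by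
    rw [← div_le_iff₀' hα]; linarith
  have hs1 : 1 ≤ s := by
    have : (1 : ℝ) ≤ s := by linarith [div_pos (by norm_num : (0 : ℝ) < 8) hα]
    exact_mod_cast this
  rw [Nat.cast_sub hs1, Nat.cast_choose_two, Nat.cast_one]
  nlinarith

theorem eventually_le_rpow_neg {f : ℕ → ℝ} (hf : ∀ n, 0 < f n) {α β : ℝ}
    (h : Tendsto (fun n : ℕ => Real.log (f n) / Real.log n) atTop (nhds (-α))) (hβ : β < α) :
    ∀ᶠ n : ℕ in atTop, f n ≤ (n : ℝ) ^ (-β) := by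
  filter_upwards [h.eventually_lt_const (neg_lt_neg hβ), eventually_ge_atTop 2] with n hlt hn
  have hlog : 0 < Real.log n := Real.log_pos (by exact_mod_cast hn)
  rw [Real.rpow_def_of_pos (by positivity), ← Real.exp_log (hf n)]
  gcongr
  rw [div_lt_iff₀ hlog] at hlt
  linarith

/-- if `t_n = log(p_n/(1-p_n)) ~ −α log n` with `α > 0`, then for all
sufficiently large `n`, `P(S_{n,p_n} ≥ 8/α + 1) ≤ 1/n`; in particular `S_{n,p_n} < 8/α + 1`
with high probability. -/
theorem block_size_bound_sparse (α : ℝ) (hα : 0 < α) (p : ℕ → ℝ)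
    (hp01 : ∀ n, p n ∈ Set.Ioo (0 : ℝ) 1)
    (ht : Tendsto (fun n : ℕ => Real.log (p n / (1 - p n)) / Real.log n) atTop (nhds (-α))) :
    ∀ᶠ n : ℕ in atTop,
      (∑ s ∈ Finset.Icc 1 n,
          if 8 / α + 1 ≤ (s : ℝ) then probBlockSize n s (p n / (1 - p n)) else 0)
        ≤ 1 / (n : ℝ) := by
  have hw : ∀ n, 0 < p n / (1 - p n) := fun n => div_pos (hp01 n).1 (sub_pos.2 (hp01 n).2)
  filter_upwards [eventually_le_rpow_neg hw ht (by linarith : 3 * α / 4 < α),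
    eventually_ge_atTop 1] with n hwn hn
  have hterm : ∀ s ∈ Icc 1 n, (if 8 / α + 1 ≤ (s : ℝ) then
      probBlockSize n s (p n / (1 - p n)) else 0) ≤ ((n : ℝ) ^ 2)⁻¹ := by
    intro s _
    split_ifs with hs
    · exact (probBlockSize_le (hw n)).trans <| pow_mul_pow_le_inv_sq (by exact_mod_cast hn)
        (hw n).le hwn (sub_one_add_two_le_mul_choose_two hα hs)
    · positivity
  calc _ ≤ #(Icc 1 n) • ((n : ℝ) ^ 2)⁻¹ := sum_le_card_nsmul _ _ _ hterm
    _ = 1 / n := by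
      rw [Nat.card_Icc, add_tsub_cancel_right, nsmul_eq_mul]
      field_simp
end

section
/- For each fixed real w ∈ (0,1) and each integer r ≥ 0, the sum E_{w,r}(τ,θ) = ∑_{t: τ+t ∈ ℕ} w^{t²/2} e^{itθ} e^t (1+t/τ)^{−τ−t+r−1/2} · (τ+t)^{τ+t} e^{−τ−t} √(2π(τ+t)) / (τ+t)! is bounded uniformly over τ ≥ 1 and θ ∈ ℝ. -/
open Real


lemma sqrt_pi_le_stirlingSeq (n : ℕ) : Real.sqrt π ≤ Stirling.stirlingSeq (n + 1) := by
  have h := Stirling.stirlingSeq'_antitone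
  have ht : Filter.Tendsto (Stirling.stirlingSeq ∘ Nat.succ) Filter.atTop (nhds (Real.sqrt π)) :=
    Stirling.tendsto_stirlingSeq_sqrt_pi.comp (Filter.tendsto_add_atTop_nat 1)
  exact h.le_of_tendsto ht n

lemma stirling_factor_le_one (m : ℕ) (hm : 1 ≤ m) :
    (m : ℝ) ^ (m : ℝ) * Real.exp (-(m : ℝ)) * Real.sqrt (2 * π * m) / (m.factorial : ℝ) ≤ 1 := by
  obtain ⟨n, rfl⟩ : ∃ n, m = n + 1 := ⟨m - 1, by omega⟩
  have h := sqrt_pi_le_stirlingSeq n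
  rw [Stirling.stirlingSeq] at h
  set k := n + 1 with hkdef
  have hk : (0:ℝ) < k := by positivity
  have hfac : (0:ℝ) < (k.factorial : ℝ) := by positivity
  have hden : (0:ℝ) < Real.sqrt (2 * k) * ((k:ℝ) / exp 1) ^ (k:ℕ) := by positivity
  rw [le_div_iff₀ hden] at h
  rw [div_le_one hfac]
  calc (k : ℝ) ^ (k : ℝ) * Real.exp (-(k : ℝ)) * Real.sqrt (2 * π * k)
      = Real.sqrt π * (Real.sqrt (2 * k) * ((k:ℝ) / exp 1) ^ (k:ℕ)) := by
        rw [Real.rpow_natCast, Real.exp_neg, div_pow, ← Real.exp_nat_mul, mul_one]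
        rw [show (2:ℝ) * π * k = π * (2 * k) by ring, Real.sqrt_mul pi_pos.le]
        field_simp
    _ ≤ (k.factorial : ℝ) := h


lemma term_bound' (w : ℝ) (hw0 : 0 < w) (hw1 : w < 1) (r : ℕ) (τ : ℝ) (hτ : 1 ≤ τ)
    (a : ℝ) (ha1 : 1 ≤ a) (S : ℝ) (hS0 : 0 ≤ S) (hS : S ≤ 1) :
    w ^ ((a - τ) ^ 2 / 2) * Real.exp (a - τ) *
      (a / τ) ^ (-τ - (a - τ) + (r : ℝ) - 1 / 2) * S
    ≤ Real.exp (((r:ℝ) + 3/2)^2 / (2 * (-Real.log w))) * Real.exp (-|a - τ|) := by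
  have ha0 : 0 < a := by linarith
  have hτ0 : 0 < τ := by linarith
  set t : ℝ := a - τ with htdef
  set u : ℝ := a / τ with hudef
  have hu : 0 < u := div_pos ha0 hτ0
  have hL : 0 < -Real.log w := by
    have := Real.log_neg hw0 hw1; linarith
  set L : ℝ := -Real.log w with hLdef
  set s : ℝ := (r : ℝ) + 1/2 with hsdef
  have hs0 : 0 ≤ s := by positivity
  have hsplit : u ^ (-τ - t + (r : ℝ) - 1 / 2) = u ^ (-a) * u ^ ((r:ℝ) - 1/2) := by
    rw [← Real.rpow_add hu]; ring_nf; rw [htdef]; ring_nf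
  -- step C : exp t * u^(-a) ≤ 1
  have hC : Real.exp t * u ^ (-a) ≤ 1 := by
    rw [Real.rpow_def_of_pos hu, ← Real.exp_add, Real.exp_le_one_iff]
    have hlog : Real.log (τ / a) ≤ τ / a - 1 := Real.log_le_sub_one_of_pos (div_pos hτ0 ha0)
    rw [Real.log_div (ne_of_gt hτ0) (ne_of_gt ha0)] at hlog
    have hlu : Real.log u = Real.log a - Real.log τ := Real.log_div (ne_of_gt ha0) (ne_of_gt hτ0)
    have hta : τ / a * a = τ := by field_simp
    nlinarith [mul_le_mul_of_nonneg_right hlog ha0.le]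
  have habs : 0 ≤ |t| := abs_nonneg t
  have hexp_rpow : ∀ x y : ℝ, (Real.exp x) ^ y = Real.exp (x * y) := by
    intro x y
    rw [Real.rpow_def_of_pos (Real.exp_pos x), Real.log_exp]
  have hD1 : u ^ (r:ℝ) ≤ Real.exp ((r:ℝ) * |t|) := by
    rcases le_or_gt τ a with h | h
    · have ht0 : 0 ≤ t := by rw [htdef]; linarith
      have habs' : |t| = t := abs_of_nonneg ht0
      have hu1 : u ≤ 1 + t := by
        rw [hudef, div_le_iff₀ hτ0, htdef]
        nlinarith
      calc u ^ (r:ℝ) ≤ (Real.exp t) ^ (r:ℝ) := by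
            apply Real.rpow_le_rpow hu.le _ (by positivity)
            calc u ≤ 1 + t := hu1
              _ ≤ Real.exp t := by linarith [Real.add_one_le_exp t]
        _ = Real.exp (t * (r:ℝ)) := hexp_rpow t (r:ℝ)
        _ = Real.exp ((r:ℝ) * |t|) := by rw [habs']; ring_nf
    · have hu1 : u ≤ 1 := by rw [hudef, div_le_one hτ0]; linarith
      calc u ^ (r:ℝ) ≤ 1 := Real.rpow_le_one hu.le hu1 (by positivity)
        _ ≤ Real.exp ((r:ℝ) * |t|) := Real.one_le_exp (by positivity)
  have hD2 : u ^ (-(1/2) : ℝ) ≤ Real.exp (|t| / 2) := by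
    rcases le_or_gt τ a with h | h
    · have hu1 : 1 ≤ u := by rw [hudef, le_div_iff₀ hτ0]; linarith
      calc u ^ (-(1/2) : ℝ) ≤ 1 :=
            Real.rpow_le_one_of_one_le_of_nonpos hu1 (by norm_num)
        _ ≤ Real.exp (|t| / 2) := Real.one_le_exp (by positivity)
    · have habs' : |t| = τ - a := by
        rw [htdef, abs_of_neg (by linarith : a - τ < 0)]; ring
      have hinv : u⁻¹ = τ / a := by rw [hudef, inv_div]
      have hub : τ / a ≤ 1 + |t| := by
        rw [habs', div_le_iff₀ ha0]
        nlinarith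
      have heq : u ^ (-(1/2) : ℝ) = (τ / a) ^ ((1:ℝ)/2) := by
        rw [← hinv, Real.inv_rpow hu.le, ← Real.rpow_neg hu.le]
      rw [heq]
      calc (τ / a) ^ ((1:ℝ)/2) ≤ (Real.exp |t|) ^ ((1:ℝ)/2) := by
            apply Real.rpow_le_rpow (by positivity) _ (by norm_num)
            calc τ / a ≤ 1 + |t| := hub
              _ ≤ Real.exp |t| := by linarith [Real.add_one_le_exp |t|]
        _ = Real.exp (|t| * (1/2)) := hexp_rpow |t| (1/2)
        _ = Real.exp (|t| / 2) := by ring_nf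
  have hD : u ^ ((r:ℝ) - 1/2) ≤ Real.exp (s * |t|) := by
    have heq : u ^ ((r:ℝ) - 1/2) = u ^ (r:ℝ) * u ^ (-(1/2) : ℝ) := by
      rw [← Real.rpow_add hu]; ring_nf
    rw [heq]
    calc u ^ (r:ℝ) * u ^ (-(1/2) : ℝ) ≤ Real.exp ((r:ℝ) * |t|) * Real.exp (|t|/2) := by
          apply mul_le_mul hD1 hD2 (by positivity) (by positivity)
      _ = Real.exp (s * |t|) := by rw [← Real.exp_add, hsdef]; ring_nf
  have hE : w ^ (t ^ 2 / 2) = Real.exp (Real.log w * (t ^ 2 / 2)) :=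
    Real.rpow_def_of_pos hw0 _
  calc w ^ (t ^ 2 / 2) * Real.exp t * u ^ (-τ - t + (r : ℝ) - 1 / 2) * S
      = Real.exp (Real.log w * (t ^ 2 / 2)) * (Real.exp t * u ^ (-a)) * u ^ ((r:ℝ) - 1/2) * S := by
        rw [hE, hsplit]; ring
    _ ≤ Real.exp (Real.log w * (t ^ 2 / 2)) * 1 * Real.exp (s * |t|) * 1 := by
        apply mul_le_mul (mul_le_mul (mul_le_mul le_rfl hC (by positivity) (by positivity))
          hD (by positivity) (by positivity)) hS hS0 (by positivity)
    _ = Real.exp (Real.log w * (t ^ 2 / 2) + s * |t|) := by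
        rw [mul_one, mul_one, ← Real.exp_add]
    _ ≤ Real.exp ((s + 1)^2 / (2 * L) + (-|t|)) := by
        apply Real.exp_le_exp.2
        have h2L : (0:ℝ) < 2 * L := by linarith
        have hkey : -(L/2) * |t|^2 + (s+1) * |t| ≤ (s+1)^2 / (2*L) := by
          rw [le_div_iff₀ h2L]
          have expand : (-(L/2) * |t|^2 + (s+1) * |t|) * (2*L)
              = (s+1)^2 - ((s+1) - L*|t|)^2 := by ring
          rw [expand]
          linarith [sq_nonneg ((s+1) - L*|t|)]
        have hlw : Real.log w = -L := by rw [hLdef]; ring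
        rw [hlw, show t^2 = |t|^2 from (sq_abs t).symm]
        linarith [hkey, habs]
    _ = Real.exp (((r:ℝ) + 3/2)^2 / (2 * L)) * Real.exp (-|t|) := by
        rw [← Real.exp_add]
        congr 1
        rw [hsdef]
        ring


lemma majorant_summable (τ : ℝ) :
    Summable (fun m : ℕ => Real.exp (-|(m:ℝ) - τ|)) := by
  apply Summable.of_nonneg_of_le (fun m => (Real.exp_pos _).le)
    (fun m => ?_) ((summable_geometric_of_lt_one (Real.exp_pos (-1)).le
      (Real.exp_lt_one_iff.2 (by norm_num))).mul_left (Real.exp τ))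
  have h1 : -|(m:ℝ) - τ| ≤ τ - m := by
    have := le_abs_self ((m:ℝ) - τ)
    linarith
  calc Real.exp (-|(m:ℝ) - τ|) ≤ Real.exp (τ - m) := Real.exp_le_exp.2 h1
    _ = Real.exp τ * Real.exp (-1) ^ m := by
      rw [← Real.exp_nat_mul, ← Real.exp_add]
      ring_nf

set_option maxHeartbeats 800000 in
lemma majorant_tsum_le (τ : ℝ) (hτ : 1 ≤ τ) :
    ∑' m : ℕ, Real.exp (-|(m:ℝ) - τ|) ≤ 2 * (1 - Real.exp (-1))⁻¹ := by
  have hsum := majorant_summable τ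
  have he1 : Real.exp (-1) < 1 := Real.exp_lt_one_iff.2 (by norm_num)
  have he0 : (0:ℝ) ≤ Real.exp (-1) := (Real.exp_pos _).le
  have hgeom : Summable (fun k : ℕ => Real.exp (-1) ^ k) :=
    summable_geometric_of_lt_one he0 he1
  set N : ℕ := ⌈τ⌉₊ with hN
  have hτN : τ ≤ N := Nat.le_ceil τ
  have hNτ : (N:ℝ) < τ + 1 := Nat.ceil_lt_add_one (by linarith)
  rw [← hsum.sum_add_tsum_nat_add N]
  have htail : ∑' k : ℕ, Real.exp (-|((k + N : ℕ):ℝ) - τ|) ≤ (1 - Real.exp (-1))⁻¹ := by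
    have hle : ∀ k : ℕ, Real.exp (-|((k + N : ℕ):ℝ) - τ|) ≤ Real.exp (-1) ^ k := by
      intro k
      have h1 : (k:ℝ) ≤ |((k + N : ℕ):ℝ) - τ| := by
        rw [abs_of_nonneg (by push_cast; linarith)]
        push_cast; linarith
      calc Real.exp (-|((k + N : ℕ):ℝ) - τ|) ≤ Real.exp (-(k:ℝ)) :=
            Real.exp_le_exp.2 (by linarith)
        _ = Real.exp (-1) ^ k := by rw [← Real.exp_nat_mul]; ring_nf
    calc ∑' k : ℕ, Real.exp (-|((k + N : ℕ):ℝ) - τ|)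
        ≤ ∑' k : ℕ, Real.exp (-1) ^ k :=
          Summable.tsum_le_tsum hle ((summable_nat_add_iff N).2 hsum) hgeom
      _ = (1 - Real.exp (-1))⁻¹ := tsum_geometric_of_lt_one he0 he1
  have hhead : ∑ i ∈ Finset.range N, Real.exp (-|(i:ℝ) - τ|) ≤ (1 - Real.exp (-1))⁻¹ := by
    calc ∑ i ∈ Finset.range N, Real.exp (-|(i:ℝ) - τ|)
        ≤ ∑ i ∈ Finset.range N, Real.exp (-1) ^ (N - 1 - i) := by
          apply Finset.sum_le_sum
          intro i hi
          rw [Finset.mem_range] at hi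
          have hi1 : (i:ℝ) ≤ N - 1 := by
            have : (i:ℝ) + 1 ≤ N := by exact_mod_cast hi
            linarith
          have hcast : ((N - 1 - i : ℕ) : ℝ) = (N:ℝ) - 1 - i := by
            have h3 : N - 1 - i = N - (1 + i) := by omega
            rw [h3, Nat.cast_sub (by omega)]
            push_cast; ring
          have h1 : ((N - 1 - i : ℕ) : ℝ) ≤ |(i:ℝ) - τ| := by
            rw [hcast, abs_of_nonpos (by linarith)]
            linarith
          calc Real.exp (-|(i:ℝ) - τ|) ≤ Real.exp (-((N - 1 - i : ℕ):ℝ)) :=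
                Real.exp_le_exp.2 (by linarith)
            _ = Real.exp (-1) ^ (N - 1 - i) := by rw [← Real.exp_nat_mul]; ring_nf
      _ = ∑ j ∈ Finset.range N, Real.exp (-1) ^ j :=
          Finset.sum_range_reflect (fun j => Real.exp (-1) ^ j) N
      _ ≤ ∑' j : ℕ, Real.exp (-1) ^ j :=
          hgeom.sum_le_tsum _ (fun j _ => by positivity)
      _ = (1 - Real.exp (-1))⁻¹ := tsum_geometric_of_lt_one he0 he1
  linarith

/-- The correction factor `E_{w,r}(τ,θ)` in the Laplace-method asymptotics of
`C_r(w, τ(1/w)^{τ-1/2} e^{iθ})`; the sum ranges over real `t` with `τ + t = m ∈ ℕ≥1`. -/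
noncomputable def Efun (w : ℝ) (r : ℕ) (τ θ : ℝ) : ℂ :=
  ∑' m : ℕ,
    if 1 ≤ m then
      ((w ^ (((m : ℝ) - τ) ^ 2 / 2) * Real.exp ((m : ℝ) - τ) *
          ((m : ℝ) / τ) ^ (-τ - ((m : ℝ) - τ) + (r : ℝ) - 1 / 2) *
          ((m : ℝ) ^ (m : ℝ) * Real.exp (-(m : ℝ)) * Real.sqrt (2 * Real.pi * m) /
            (m.factorial : ℝ)) : ℝ) : ℂ) *
        Complex.exp (Complex.I * (((m : ℝ) - τ) * θ))
    else 0

/-- for fixed `w ∈ (0,1)` and `r ∈ ℕ`, the function `E_{w,r}(τ,θ)` is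
bounded uniformly over `τ ≥ 1` and `θ ∈ ℝ`. -/
theorem Efun_bounded (w : ℝ) (hw : w ∈ Set.Ioo (0 : ℝ) 1) (r : ℕ) :
    ∃ M : ℝ, ∀ τ : ℝ, 1 ≤ τ → ∀ θ : ℝ, ‖Efun w r τ θ‖ ≤ M := by
  obtain ⟨hw0, hw1⟩ := hw
  set C : ℝ := Real.exp (((r:ℝ) + 3/2)^2 / (2 * (-Real.log w))) with hC
  have hC0 : 0 ≤ C := (Real.exp_pos _).le
  refine ⟨C * (2 * (1 - Real.exp (-1))⁻¹), fun τ hτ θ => ?_⟩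
  have hτ0 : 0 < τ := by linarith
  set f : ℕ → ℂ := fun m =>
    if 1 ≤ m then
      ((w ^ (((m : ℝ) - τ) ^ 2 / 2) * Real.exp ((m : ℝ) - τ) *
          ((m : ℝ) / τ) ^ (-τ - ((m : ℝ) - τ) + (r : ℝ) - 1 / 2) *
          ((m : ℝ) ^ (m : ℝ) * Real.exp (-(m : ℝ)) * Real.sqrt (2 * Real.pi * m) /
            (m.factorial : ℝ)) : ℝ) : ℂ) *
        Complex.exp (Complex.I * (((m : ℝ) - τ) * θ))
    else 0 with hf
  have hnorm : ∀ m : ℕ, ‖f m‖ ≤ C * Real.exp (-|(m:ℝ) - τ|) := by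
    intro m
    by_cases hm : 1 ≤ m
    · rw [hf]
      simp only [if_pos hm]
      have hx0 : 0 ≤ w ^ (((m : ℝ) - τ) ^ 2 / 2) * Real.exp ((m : ℝ) - τ) *
          ((m : ℝ) / τ) ^ (-τ - ((m : ℝ) - τ) + (r : ℝ) - 1 / 2) *
          ((m : ℝ) ^ (m : ℝ) * Real.exp (-(m : ℝ)) * Real.sqrt (2 * Real.pi * m) /
            (m.factorial : ℝ)) := by positivity
      have hunit : ‖Complex.exp (Complex.I * ((((m:ℝ):ℂ) - ↑τ) * (↑θ:ℂ)))‖ = 1 := by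
        have hcast : ((((m:ℝ):ℂ) - ↑τ) * (↑θ:ℂ)) = ((((m:ℝ) - τ) * θ : ℝ) : ℂ) := by
          push_cast; ring
        rw [hcast, mul_comm, Complex.norm_exp_ofReal_mul_I]
      rw [norm_mul, hunit, mul_one, Complex.norm_real, Real.norm_eq_abs, abs_of_nonneg hx0]
      exact term_bound' w hw0 hw1 r τ hτ (m:ℝ) (by exact_mod_cast hm) _
        (by positivity) (stirling_factor_le_one m hm)
    · rw [hf]
      simp only [if_neg hm, norm_zero]
      positivity
  have hmaj : Summable (fun m : ℕ => C * Real.exp (-|(m:ℝ) - τ|)) :=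
    (majorant_summable τ).mul_left C
  have hsn : Summable (fun m : ℕ => ‖f m‖) :=
    Summable.of_nonneg_of_le (fun m => norm_nonneg _) hnorm hmaj
  calc ‖Efun w r τ θ‖ = ‖∑' m, f m‖ := rfl
    _ ≤ ∑' m, ‖f m‖ := norm_tsum_le_tsum_norm hsn
    _ ≤ ∑' m : ℕ, C * Real.exp (-|(m:ℝ) - τ|) := Summable.tsum_le_tsum hnorm hsn hmaj
    _ = C * ∑' m : ℕ, Real.exp (-|(m:ℝ) - τ|) := tsum_mul_left
    _ ≤ C * (2 * (1 - Real.exp (-1))⁻¹) :=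
        mul_le_mul_of_nonneg_left (majorant_tsum_le τ hτ) hC0
end
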